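/- There exists an origin-symmetric set of 240 points on the unit sphere S^7 in E^8 with covering radius exactly π/4, namely the normalized set of 240 minimal vectors of the E8 lattice: the vectors (±2, ±2, 0^6)/√8 (all coordinate positions and signs) together with the vectors (±1)^8/√8 with an even number of minus signs. In particular, π/4 < arccos(√(7/16)). -/

import Mathlib

open RealInnerProductSpace

/-- The caps of angular radius `r` centered at points of `A` cover the unit sphere. -/
def Covers {n : ℕ} (A : Set (EuclideanSpace ℝ (Fin n))) (r : ℝ) : Prop :=
  ∀ x ∈ Metric.sphere (0 : EuclideanSpace ℝ (Fin n)) 1, ∃ a ∈ A, Real.arccos ⟪x, a⟫ ≤ r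

/-- The covering radius of `A`. -/
noncomputable def covRadius {n : ℕ} (A : Set (EuclideanSpace ℝ (Fin n))) : ℝ :=
  sInf {r : ℝ | 0 < r ∧ Covers A r}

/-- The 240 minimal (root) vectors of the `E₈` lattice: vectors with two coordinates
`±2` and the rest `0`, together with vectors with all coordinates `±1` and an even
number of minus signs. -/
def E8roots : Set (EuclideanSpace ℝ (Fin 8)) :=
  {v | (∃ i j : Fin 8, i ≠ j ∧ (v i = 2 ∨ v i = -2) ∧ (v j = 2 ∨ v j = -2) ∧
          ∀ k, k ≠ i → k ≠ j → v k = 0) ∨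
        ((∀ i, v i = 1 ∨ v i = -1) ∧ Even ({i : Fin 8 | v i = -1}.ncard))}

/-- The normalized `E₈` root system, as a subset of the unit sphere `S⁷`. -/
noncomputable def E8A : Set (EuclideanSpace ℝ (Fin 8)) :=
  (fun v => (Real.sqrt 8)⁻¹ • v) '' E8roots

/-!
All roots have norm `√8`, so a normalized root `v / √8` lies within angle `π / 4` of a
unit vector `x` exactly when `⟪x, v⟫ ≥ 2`. Let `y = |x|` have largest entries
`a = y i₁ ≥ t = y i₂` and smallest entry `m`. The root `2(±e_{i₁} ± e_{i₂})` gives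
`⟪x, v⟫ = 2(a + t)`, and a `±1` root copying the signs of `x` except possibly at the smallest
entry gives at least `∑ y - 2m`. If `a + t < 1`, the other seven entries lie in `[m, t]`, so
`yᵢ² ≤ (t + m)yᵢ - tm`, and together with `∑ y² = 1` this forces `∑ y - 2m ≥ 2`.
Conversely `⟪e₀, v⟫ ≤ 2` for every root, so `π / 4` cannot be improved.
-/

open Finset Real

section Vectors

variable {ι : Type*} [DecidableEq ι]

noncomputable def pairVec (i j : ι) (a b : ℝ) : EuclideanSpace ℝ ι :=
  EuclideanSpace.single i a + EuclideanSpace.single j b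

noncomputable def signVec (s : Finset ι) : EuclideanSpace ℝ ι :=
  WithLp.toLp 2 fun i => if i ∈ s then -1 else 1

@[simp] lemma pairVec_apply (i j : ι) (a b : ℝ) (k : ι) :
    pairVec i j a b k = (if k = i then a else 0) + (if k = j then b else 0) := by
  simp [pairVec]

@[simp] lemma signVec_apply (s : Finset ι) (k : ι) :
    signVec s k = if k ∈ s then -1 else 1 := rfl

lemma eq_pairVec_of_apply_eq_zero {v : EuclideanSpace ℝ ι} {i j : ι}
    (hij : i ≠ j) (h : ∀ k, k ≠ i → k ≠ j → v k = 0) : v = pairVec i j (v i) (v j) := by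
  ext k
  by_cases hki : k = i
  · simp [hki, hij]
  by_cases hkj : k = j
  · simp [hkj, hij.symm]
  simp [hki, hkj, h k hki hkj]

lemma pairVec_apply_ne_zero_iff {i j : ι} (hij : i ≠ j) {a b : ℝ}
    (ha : a ≠ 0) (hb : b ≠ 0) (k : ι) : pairVec i j a b k ≠ 0 ↔ k = i ∨ k = j := by
  by_cases hki : k = i
  · simp [hki, hij, ha]
  by_cases hkj : k = j
  · simp [hkj, hij.symm, hb]
  simp [hki, hkj]

lemma pairVec_injOn [LinearOrder ι] :
    Set.InjOn (fun p : (ι × ι) × ℝ × ℝ => pairVec p.1.1 p.1.2 p.2.1 p.2.2)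
      {p | p.1.1 < p.1.2 ∧ p.2.1 ≠ 0 ∧ p.2.2 ≠ 0} := by
  rintro ⟨⟨i, j⟩, a, b⟩ ⟨hij, ha, hb⟩ ⟨⟨i', j'⟩, a', b'⟩ ⟨hij', ha', hb'⟩ h
  simp only at hij ha hb hij' ha' hb' h
  have hsupp : ∀ k, k = i ∨ k = j ↔ k = i' ∨ k = j' := fun k => by
    rw [← pairVec_apply_ne_zero_iff hij.ne ha hb, ← pairVec_apply_ne_zero_iff hij'.ne ha' hb',
      h]
  obtain rfl : i = i' := by
    rcases (hsupp i).1 (.inl rfl) with h₁ | rfl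
    · exact h₁
    rcases (hsupp i').2 (.inl rfl) with h₂ | rfl
    · exact h₂.symm
    exact absurd (hij.trans hij') (lt_irrefl _)
  obtain rfl : j = j' := by
    rcases (hsupp j).1 (.inr rfl) with rfl | h₁
    · exact absurd hij (lt_irrefl _)
    · exact h₁
  have hi := congrArg (· i) h
  have hj := congrArg (· j) h
  simp [hij.ne, hij.ne'] at hi hj
  rw [hi, hj]

lemma signVec_injective : Function.Injective (signVec : Finset ι → _) := by
  intro s t h
  ext i
  have hi := congrArg (· i) h
  by_cases hs : i ∈ s <;> by_cases ht : i ∈ t <;> simp [hs, ht] at hi ⊢ <;> norm_num at hi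

variable [Fintype ι]

lemma inner_pairVec (x : EuclideanSpace ℝ ι) (i j : ι) (a b : ℝ) :
    ⟪x, pairVec i j a b⟫ = a * x i + b * x j := by
  simp [pairVec, inner_add_right, EuclideanSpace.inner_single_right]

lemma inner_signVec (x : EuclideanSpace ℝ ι) (s : Finset ι) :
    ⟪x, signVec s⟫ = ∑ i, x i * if i ∈ s then -1 else 1 := by
  simp [PiLp.inner_apply, mul_comm]

end Vectors

lemma exists_sign_mul_eq_abs (t : ℝ) : ∃ ε : ℝ, (ε = 1 ∨ ε = -1) ∧ ε * t = |t| := by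
  rcases le_total 0 t with h | h
  · exact ⟨1, .inl rfl, by simp [abs_of_nonneg h]⟩
  · exact ⟨-1, .inr rfl, by simp [abs_of_nonpos h]⟩

lemma Finset.exists_even_card_mem_iff_of_ne {ι : Type*} [DecidableEq ι] (t : Finset ι) (k : ι) :
    ∃ s : Finset ι, Even s.card ∧ ∀ i, i ≠ k → (i ∈ s ↔ i ∈ t) := by
  by_cases ht : Even t.card
  · exact ⟨t, ht, fun _ _ => Iff.rfl⟩
  rw [Nat.not_even_iff_odd] at ht
  by_cases hk : k ∈ t
  · refine ⟨t.erase k, ?_, fun i hi => by simp [hi]⟩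
    rw [card_erase_of_mem hk]
    exact ht.tsub_odd odd_one
  · refine ⟨insert k t, ?_, fun i hi => by simp [hi]⟩
    rw [card_insert_of_notMem hk]
    exact ht.add_one

lemma two_add_two_mul_le_add_sum {ι : Type*} {s : Finset ι} (hs : s.card = 7) {y : ι → ℝ}
    {a t m : ℝ} (hmy : ∀ i ∈ s, m ≤ y i) (hyt : ∀ i ∈ s, y i ≤ t) (hm : 0 ≤ m)
    (hta : t ≤ a) (hat : a + t < 1) (hsq : a ^ 2 + ∑ i ∈ s, y i ^ 2 = 1) :
    2 + 2 * m ≤ a + ∑ i ∈ s, y i := by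
  set S := ∑ i ∈ s, y i
  have hquad : ∑ i ∈ s, y i ^ 2 ≤ (t + m) * S - 7 * (t * m) := by
    calc ∑ i ∈ s, y i ^ 2 ≤ ∑ i ∈ s, ((t + m) * y i - t * m) := sum_le_sum fun i hi => by
          nlinarith [mul_nonneg (sub_nonneg.2 (hyt i hi)) (sub_nonneg.2 (hmy i hi))]
      _ = (t + m) * S - 7 * (t * m) := by rw [sum_sub_distrib, ← mul_sum, sum_const, hs]; ring
  have ha : a ^ 2 ≤ a - t + t ^ 2 := by
    nlinarith [mul_nonneg (sub_nonneg.2 hta) (by linarith : (0 : ℝ) ≤ 1 - t - a)]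
  have hmt : m ≤ t := by
    obtain ⟨i, hi⟩ := card_pos.1 (by rw [hs]; norm_num)
    exact (hmy i hi).trans (hyt i hi)
  have htm : 0 < t + m := by
    by_contra! h
    obtain rfl : t = 0 := by linarith
    obtain rfl : m = 0 := by linarith
    simp only [zero_add, zero_mul, mul_zero, sub_zero] at hquad
    nlinarith
  -- by `hsq`, `hquad` and `ha`:
  -- `(t + m)(a + S - 2 - 2m) ≥ (t - m)(1 - 2(t - m)) + (1 - t - a)(1 - t - m)`
  nlinarith [mul_nonneg (sub_nonneg.2 hmt) (by linarith : (0 : ℝ) ≤ 1 - 2 * (t - m)),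
    mul_nonneg (by linarith : (0 : ℝ) ≤ 1 - t - a) (by linarith : (0 : ℝ) ≤ 1 - t - m)]

lemma pairVec_mem_E8roots {i j : Fin 8} (hij : i ≠ j) {a b : ℝ} (ha : a = 2 ∨ a = -2)
    (hb : b = 2 ∨ b = -2) : pairVec i j a b ∈ E8roots :=
  Or.inl ⟨i, j, hij, by simpa [hij] using ha, by simpa [hij.symm] using hb,
    fun k hki hkj => by simp [hki, hkj]⟩

lemma signVec_mem_E8roots {s : Finset (Fin 8)} (hs : Even s.card) : signVec s ∈ E8roots := by
  refine Or.inr ⟨fun i => by by_cases h : i ∈ s <;> simp [h], ?_⟩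
  have : {i | signVec s i = -1} = ↑s := by
    ext i
    by_cases h : i ∈ s <;> simp [h]
    norm_num
  rwa [this, Set.ncard_coe_finset]

noncomputable def rootPairs : Finset ((Fin 8 × Fin 8) × ℝ × ℝ) :=
  ({p : Fin 8 × Fin 8 | p.1 < p.2} : Finset _) ×ˢ (({2, -2} : Finset ℝ) ×ˢ {2, -2})

def evenSubsets : Finset (Finset (Fin 8)) := {s | Even s.card}

@[simp] lemma mem_rootPairs {i j : Fin 8} {a b : ℝ} :
    ((i, j), a, b) ∈ rootPairs ↔ i < j ∧ (a = 2 ∨ a = -2) ∧ (b = 2 ∨ b = -2) := by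
  simp [rootPairs]

lemma E8roots_eq : E8roots =
    (fun p : (Fin 8 × Fin 8) × ℝ × ℝ => pairVec p.1.1 p.1.2 p.2.1 p.2.2) '' rootPairs ∪
      signVec '' evenSubsets := by
  ext v
  constructor
  · rintro (⟨i, j, hij, hi, hj, hzero⟩ | ⟨hsign, heven⟩)
    · left
      rcases hij.lt_or_gt with hlt | hlt
      · exact ⟨((i, j), v i, v j), by simp [hlt, hi, hj],
          (eq_pairVec_of_apply_eq_zero hij hzero).symm⟩
      · exact ⟨((j, i), v j, v i), by simp [hlt, hi, hj],
          (eq_pairVec_of_apply_eq_zero hij.symm fun k hkj hki => hzero k hki hkj).symm⟩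
    · right
      refine ⟨({i | v i = -1} : Finset _), ?_, ?_⟩
      · simpa [evenSubsets, ← Set.ncard_coe_finset] using heven
      · ext i
        rcases hsign i with h | h <;> simp [h]
        norm_num
  · rintro (⟨⟨⟨i, j⟩, a, b⟩, hp, rfl⟩ | ⟨s, hs, rfl⟩)
    · obtain ⟨hij, ha, hb⟩ := mem_rootPairs.1 hp
      exact pairVec_mem_E8roots hij.ne ha hb
    · exact signVec_mem_E8roots (by simpa [evenSubsets] using hs)

set_option maxRecDepth 40000 in
lemma card_evenSubsets : evenSubsets.card = 128 := by decide

lemma card_rootPairs : rootPairs.card = 112 := by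
  have hpairs : ({p : Fin 8 × Fin 8 | p.1 < p.2} : Finset _).card = 28 := by decide
  have hsigns : ({2, -2} : Finset ℝ).card = 2 := card_pair (by norm_num)
  simp only [rootPairs, card_product, hpairs, hsigns]

lemma E8roots_ncard : E8roots.ncard = 240 := by
  rw [E8roots_eq,
    Set.ncard_union_eq ?disjoint ((finite_toSet _).image _) ((finite_toSet _).image _),
    Set.InjOn.ncard_image ?injOn, Set.ncard_image_of_injective _ signVec_injective,
    Set.ncard_coe_finset, Set.ncard_coe_finset, card_rootPairs, card_evenSubsets]
  case disjoint =>
    rw [Set.disjoint_left]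
    rintro _ ⟨⟨⟨i, j⟩, a, b⟩, -, rfl⟩ ⟨s, -, hs⟩
    obtain ⟨k, hki, hkj⟩ : ∃ k : Fin 8, k ≠ i ∧ k ≠ j := by clear hs; revert i j; decide
    have hk := congrArg (· k) hs
    by_cases hks : k ∈ s <;> simp [hki, hkj, hks] at hk
  case injOn =>
    refine pairVec_injOn.mono ?_
    rintro ⟨⟨i, j⟩, a, b⟩ hp
    obtain ⟨hij, ha, hb⟩ := mem_rootPairs.1 hp
    refine ⟨hij, ?_, ?_⟩
    · rcases ha with rfl | rfl <;> norm_num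
    · rcases hb with rfl | rfl <;> norm_num

lemma norm_of_mem_E8roots {v : EuclideanSpace ℝ (Fin 8)} (hv : v ∈ E8roots) :
    ‖v‖ = √8 := by
  suffices ⟪v, v⟫ = 8 by
    rw [← Real.sqrt_sq (norm_nonneg v), ← real_inner_self_eq_norm_sq, this]
  rw [E8roots_eq] at hv
  rcases hv with ⟨⟨⟨i, j⟩, a, b⟩, hp, rfl⟩ | ⟨s, -, rfl⟩
  · obtain ⟨hij, ha, hb⟩ := mem_rootPairs.1 hp
    simp only [inner_pairVec, pairVec_apply, if_neg hij.ne, if_neg hij.ne']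
    rcases ha with rfl | rfl <;> rcases hb with rfl | rfl <;> norm_num
  · have h : ∀ i, signVec s i * (if i ∈ s then -1 else 1) = 1 := fun i => by
      by_cases hi : i ∈ s <;> simp [hi]
    rw [inner_signVec]
    simp only [h, sum_const, card_univ, Fintype.card_fin]
    norm_num

lemma neg_mem_E8roots {v : EuclideanSpace ℝ (Fin 8)} (hv : v ∈ E8roots) : -v ∈ E8roots := by
  rw [E8roots_eq] at hv
  rcases hv with ⟨⟨⟨i, j⟩, a, b⟩, hp, rfl⟩ | ⟨s, hs, rfl⟩
  · obtain ⟨hij, ha, hb⟩ := mem_rootPairs.1 hp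
    have : -pairVec i j a b = pairVec i j (-a) (-b) := by
      ext k
      simp only [PiLp.neg_apply, pairVec_apply]
      split_ifs <;> ring
    rw [this]
    exact pairVec_mem_E8roots hij.ne (by rcases ha with rfl | rfl <;> norm_num)
      (by rcases hb with rfl | rfl <;> norm_num)
  · have : -signVec s = signVec sᶜ := by ext k; by_cases hk : k ∈ s <;> simp [hk]
    rw [this]
    refine signVec_mem_E8roots ?_
    simp [evenSubsets] at hs
    rw [card_compl, Nat.even_sub (card_le_univ s)]
    exact iff_of_true (by decide) hs

lemma apply_le_two_of_mem_E8roots {v : EuclideanSpace ℝ (Fin 8)} (hv : v ∈ E8roots)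
    (k : Fin 8) : v k ≤ 2 := by
  rcases hv with ⟨i, j, hij, hi, hj, hzero⟩ | ⟨hsign, -⟩
  · by_cases hki : k = i
    · rcases hki ▸ hi with h | h <;> linarith
    by_cases hkj : k = j
    · rcases hkj ▸ hj with h | h <;> linarith
    linarith [hzero k hki hkj]
  · rcases hsign k with h | h <;> linarith

lemma exists_mem_E8roots_inner_eq (x : EuclideanSpace ℝ (Fin 8)) {i j : Fin 8} (hij : i ≠ j) :
    ∃ v ∈ E8roots, ⟪x, v⟫ = 2 * (|x i| + |x j|) := by
  obtain ⟨ε, hε, hεx⟩ := exists_sign_mul_eq_abs (x i)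
  obtain ⟨δ, hδ, hδx⟩ := exists_sign_mul_eq_abs (x j)
  refine ⟨pairVec i j (2 * ε) (2 * δ), pairVec_mem_E8roots hij ?_ ?_, ?_⟩
  · rcases hε with rfl | rfl <;> norm_num
  · rcases hδ with rfl | rfl <;> norm_num
  · rw [inner_pairVec, ← hεx, ← hδx]; ring

lemma exists_mem_E8roots_sum_abs_sub_le_inner (x : EuclideanSpace ℝ (Fin 8)) (k : Fin 8) :
    ∃ v ∈ E8roots, ∑ i, |x i| - 2 * |x k| ≤ ⟪x, v⟫ := by
  obtain ⟨s, hs, hsk⟩ := exists_even_card_mem_iff_of_ne ({i | x i < 0} : Finset _) k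
  refine ⟨signVec s, signVec_mem_E8roots hs, ?_⟩
  rw [inner_signVec]
  calc ∑ i, |x i| - 2 * |x k| = ∑ i, (|x i| - if i = k then 2 * |x i| else 0) := by
        rw [sum_sub_distrib, sum_ite_eq' univ k]; simp
    _ ≤ ∑ i, x i * if i ∈ s then -1 else 1 := sum_le_sum fun i _ => by
        by_cases hik : i = k
        · subst hik
          rw [if_pos rfl]
          split_ifs <;> linarith [neg_abs_le (x i), le_abs_self (x i)]
        · have := hsk i hik
          rcases lt_or_ge (x i) 0 with h | h
          · simp [hik, this, h, abs_of_neg h]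
          · simp [hik, this, not_lt.2 h, abs_of_nonneg h]

lemma exists_mem_E8roots_two_le_inner {x : EuclideanSpace ℝ (Fin 8)} (hx : ‖x‖ = 1) :
    ∃ v ∈ E8roots, 2 ≤ ⟪x, v⟫ := by
  set y : Fin 8 → ℝ := fun i => |x i|
  have hsq : ∑ i, y i ^ 2 = 1 := by simpa [y, hx] using (EuclideanSpace.real_norm_sq_eq x).symm
  obtain ⟨i₁, -, hi₁⟩ := exists_max_image univ y univ_nonempty
  obtain ⟨i₂, hi₂, hi₂max⟩ := exists_max_image (univ.erase i₁) y
    ⟨i₁ + 1, by simp⟩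
  obtain ⟨i₀, -, hi₀⟩ := exists_min_image univ y univ_nonempty
  by_cases hbig : 1 ≤ y i₁ + y i₂
  · obtain ⟨v, hv, hinner⟩ := exists_mem_E8roots_inner_eq x (ne_of_mem_erase hi₂).symm
    exact ⟨v, hv, by rw [hinner]; linarith⟩
  obtain ⟨v, hv, hinner⟩ := exists_mem_E8roots_sum_abs_sub_le_inner x i₀
  have hsplit := add_sum_erase univ y (mem_univ i₁)
  have := two_add_two_mul_le_add_sum (s := univ.erase i₁) (by simp)
    (fun i _ => hi₀ i (mem_univ i)) hi₂max (abs_nonneg _) (hi₁ _ (mem_univ _)) (not_le.1 hbig)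
    (by rwa [add_sum_erase univ (fun i => y i ^ 2) (mem_univ i₁)])
  exact ⟨v, hv, by linarith⟩

lemma neg_E8roots : -E8roots = E8roots :=
  Set.ext fun v => ⟨fun hv => neg_neg v ▸ neg_mem_E8roots hv, neg_mem_E8roots⟩

lemma E8A_subset_sphere : E8A ⊆ Metric.sphere 0 1 := by
  rintro _ ⟨v, hv, rfl⟩
  simp [norm_smul, norm_of_mem_E8roots hv, abs_of_pos (show (0 : ℝ) < √8 by positivity)]

lemma neg_E8A : -E8A = E8A := by
  rw [E8A, Set.image_smul, ← Set.smul_set_neg, neg_E8roots]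

lemma E8A_ncard : E8A.ncard = 240 := by
  rw [E8A, Set.ncard_image_of_injective _ (smul_right_injective _ (by positivity)), E8roots_ncard]

lemma inv_sqrt_eight_mul_two : (√8)⁻¹ * 2 = √2 / 2 := by
  have h8 : √8 = 2 * √2 := by
    rw [show (8 : ℝ) = 2 ^ 2 * 2 by norm_num, Real.sqrt_mul (by norm_num),
      Real.sqrt_sq (by norm_num)]
  have h2 : √2 * √2 = 2 := Real.mul_self_sqrt (by norm_num)
  rw [h8]
  field_simp
  linarith

lemma arccos_inner_le_pi_div_four_iff (x v : EuclideanSpace ℝ (Fin 8)) :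
    Real.arccos ⟪x, (√8)⁻¹ • v⟫ ≤ π / 4 ↔ 2 ≤ ⟪x, v⟫ := by
  rw [Real.arccos_le_pi_div_four, real_inner_smul_right, ← inv_sqrt_eight_mul_two,
    mul_le_mul_iff_of_pos_left (by positivity)]

lemma covers_E8A_iff (r : ℝ) : Covers E8A r ↔ π / 4 ≤ r := by
  constructor
  · intro hcov
    obtain ⟨_, ⟨v, hv, rfl⟩, hr⟩ :=
      hcov (EuclideanSpace.single 0 1) (by simp)
    have hinner : ⟪EuclideanSpace.single 0 1, (√8)⁻¹ • v⟫ ≤ √2 / 2 := by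
      rw [real_inner_smul_right, EuclideanSpace.inner_single_left, ← inv_sqrt_eight_mul_two]
      simpa using apply_le_two_of_mem_E8roots hv 0
    calc π / 4 = Real.arccos (√2 / 2) := by
          rw [← Real.cos_pi_div_four, Real.arccos_cos (by positivity) (by linarith [Real.pi_pos])]
      _ ≤ _ := Real.arccos_le_arccos hinner
      _ ≤ r := hr
  · intro hr x hx
    obtain ⟨v, hv, hinner⟩ := exists_mem_E8roots_two_le_inner (mem_sphere_zero_iff_norm.1 hx)
    exact ⟨_, ⟨v, hv, rfl⟩, ((arccos_inner_le_pi_div_four_iff x v).2 hinner).trans hr⟩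

lemma covRadius_E8A : covRadius E8A = π / 4 := by
  have : {r : ℝ | 0 < r ∧ Covers E8A r} = Set.Ici (π / 4) := Set.ext fun r => by
    simp only [Set.mem_ofPred_eq, covers_E8A_iff, Set.mem_Ici]
    exact ⟨And.right, fun h => ⟨(by positivity : (0 : ℝ) < π / 4).trans_le h, h⟩⟩
  rw [covRadius, this, csInf_Ici]

theorem e8_covering : E8A.ncard = 240 ∧
    E8A ⊆ Metric.sphere (0 : EuclideanSpace ℝ (Fin 8)) 1 ∧
    -E8A = E8A ∧
    covRadius E8A = Real.pi / 4 ∧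
    Real.pi / 4 < Real.arccos (Real.sqrt (7 / 16)) := by
  refine ⟨E8A_ncard, E8A_subset_sphere, neg_E8A, covRadius_E8A, ?_⟩
  rw [← not_le, Real.arccos_le_pi_div_four, not_le, Real.sqrt_lt' (by positivity), div_pow,
    Real.sq_sqrt (by norm_num)]
  norm_num
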